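/- Stable Ramsey theorem (qualitative polynomial form): for every positive integer k there exists a constant c = c(k) > 0 such that every finite graph G with no half-graph of length k contains a clique or an independent set of size at least |G|^c. -/

import Mathlib

/-!
A splitting tree of height `2k` contains a half-graph of length `k`. So if there is none, then
starting from `V` and repeatedly moving, from a vertex with more than `ε |A|` neighbours and
more than `ε |A|` non-neighbours in the current set `A`, to a side carrying no splitting tree of
the next smaller height, we stop within `2k` steps at a set `B` of size at least `ε ^ (2k) n`
in which every vertex has at most `ε |B|` neighbours or at most `ε |B|` non-neighbours. Half
of `B` is of one of these two kinds, and there a greedy choice finds a clique or an independent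
set of size about `1 / (4ε)`. With `c = 1 / (8k + 4)` and `ε = n ^ (-4c)` this is
`n ^ (4c) / 4 ≥ n ^ c` once `n ^ c ≥ 2`; below that, two vertices suffice.
-/

open Finset

namespace SimpleGraph

variable {V : Type*} (G : SimpleGraph V)

def IsHalfGraph {k : ℕ} (a b : Fin k → V) : Prop :=
  ∀ i j, G.Adj (a i) (b j) ↔ i < j

def HasSplitTree [DecidableRel G.Adj] : ℕ → Finset V → Prop
  | 0, S => S.Nonempty
  | h + 1, S => ∃ c ∈ S, HasSplitTree h {y ∈ S | G.Adj c y} ∧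
      HasSplitTree h {y ∈ S | ¬G.Adj c y}

def IsEpsGood [DecidableRel G.Adj] (ε : ℝ) (B : Finset V) : Prop :=
  ∀ x ∈ B, (#{y ∈ B | G.Adj x y} : ℝ) ≤ ε * #B ∨ (#{y ∈ B | ¬G.Adj x y} : ℝ) ≤ ε * #B

variable {G} [DecidableRel G.Adj]

theorem HasSplitTree.exists_isHalfGraph (r : ℕ) {S : Finset V} (hS : G.HasSplitTree (2 * r) S) :
    ∃ a b : Fin r → V, G.IsHalfGraph a b ∧ (∀ i, a i ∈ S) ∧ ∀ i, b i ∈ S := by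
  induction r generalizing S with
  | zero => exact ⟨Fin.elim0, Fin.elim0, nofun, nofun, nofun⟩
  | succ r ih =>
    obtain ⟨c, hcS, -, c', hc'L, hT, -⟩ := hS
    obtain ⟨a, b, hab, haT, hbT⟩ := ih hT
    simp only [mem_filter] at hc'L haT hbT
    refine ⟨Fin.cons c' a, Fin.cons c b, fun i j => ?_, Fin.cases hc'L.1 fun i => (haT i).1.1,
      Fin.cases hcS fun i => (hbT i).1.1⟩
    cases i using Fin.cases <;> cases j using Fin.cases
    · simpa using fun h => hc'L.2 h.symm
    · simpa using (hbT _).2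
    · simpa using fun h => (haT _).1.2 h.symm
    · simpa [Fin.succ_lt_succ_iff] using hab _ _

theorem exists_isEpsGood_subset_of_not_hasSplitTree {ε : ℝ} (hε₀ : 0 ≤ ε) (hε₁ : ε ≤ 1) :
    ∀ (h : ℕ) (A : Finset V), ¬G.HasSplitTree h A →
      ∃ B ⊆ A, G.IsEpsGood ε B ∧ ε ^ h * #A ≤ #B
  | 0, A, hA => by
    rw [HasSplitTree, not_nonempty_iff_eq_empty] at hA
    exact ⟨∅, hA.ge, by simp [IsEpsGood], by simp [hA]⟩
  | h + 1, A, hA => by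
    by_cases hgood : G.IsEpsGood ε A
    · exact ⟨A, subset_rfl, hgood,
        mul_le_of_le_one_left (Nat.cast_nonneg _) (pow_le_one₀ hε₀ hε₁)⟩
    have descend : ∀ A' ⊆ A, ε * #A < #A' → ¬G.HasSplitTree h A' →
        ∃ B ⊆ A, G.IsEpsGood ε B ∧ ε ^ (h + 1) * #A ≤ #B := by
      intro A' hA' hbig htree
      obtain ⟨B, hBA', hB, hcard⟩ :=
        exists_isEpsGood_subset_of_not_hasSplitTree hε₀ hε₁ h A' htree
      refine ⟨B, hBA'.trans hA', hB, ?_⟩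
      calc ε ^ (h + 1) * #A = ε ^ h * (ε * #A) := by ring
        _ ≤ ε ^ h * #A' := by gcongr
        _ ≤ #B := hcard
    obtain ⟨x, hxA, hadj, hnonadj⟩ : ∃ x ∈ A, ε * #A < #{y ∈ A | G.Adj x y} ∧
        ε * #A < #{y ∈ A | ¬G.Adj x y} := by
      simpa [IsEpsGood, not_or] using hgood
    rcases not_and_or.mp fun htrees => hA ⟨x, hxA, htrees⟩ with htree | htree
    · exact descend _ (filter_subset _ _) hadj htree
    · exact descend _ (filter_subset _ _) hnonadj htree

theorem exists_isClique_card_le_mul {d : ℝ} (s : Finset V)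
    (hs : ∀ x ∈ s, (#{y ∈ s | ¬G.Adj x y} : ℝ) ≤ d) :
    ∃ K ⊆ s, G.IsClique (K : Set V) ∧ (#s : ℝ) ≤ d * #K := by
  classical
  induction s using Finset.strongInduction with
  | H s ih =>
  obtain rfl | ⟨x, hx⟩ := s.eq_empty_or_nonempty
  · exact ⟨∅, subset_rfl, by simp, by simp⟩
  set N := {y ∈ s | G.Adj x y}
  have hxN : x ∉ N := by simp [N]
  obtain ⟨K, hKN, hK, hcard⟩ := ih N (filter_ssubset.mpr ⟨x, hx, G.irrefl⟩) fun y hy =>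
    le_trans (by gcongr; exact filter_subset _ _) (hs y (mem_of_mem_filter y hy))
  refine ⟨insert x K, insert_subset hx (hKN.trans (filter_subset _ _)), ?_, ?_⟩
  · rw [coe_insert, isClique_insert]
    exact ⟨hK, fun y hy _ => (mem_filter.mp (hKN hy)).2⟩
  · have hsplit : (#s : ℝ) = #N + #{y ∈ s | ¬G.Adj x y} := by
      exact_mod_cast (card_filter_add_card_filter_not _).symm
    rw [card_insert_of_notMem fun h => hxN (hKN h)]
    push_cast
    linarith [hs x hx]

theorem IsEpsGood.exists_isClique_or_isIndepSet {ε : ℝ} {B : Finset V} (hB : G.IsEpsGood ε B)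
    (hεB : 1 ≤ ε * #B) :
    ∃ K ⊆ B, (G.IsClique (K : Set V) ∨ G.IsIndepSet (K : Set V)) ∧ 1 ≤ 4 * ε * #K := by
  classical
  set d := ε * #B + 1
  have card_bound : ∀ P K : Finset V, (#B : ℝ) ≤ 2 * #P → (#P : ℝ) ≤ d * #K →
      1 ≤ 4 * ε * #K := by
    intro P K hP hK
    have hBpos : (0 : ℝ) < #B :=
      (Nat.cast_nonneg _).lt_of_ne fun h => by rw [← h, mul_zero] at hεB; linarith
    nlinarith [(#K).cast_nonneg (α := ℝ)]
  set P := {x ∈ B | (#{y ∈ B | ¬G.Adj x y} : ℝ) ≤ ε * #B}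
  set Q := {x ∈ B | ¬(#{y ∈ B | ¬G.Adj x y} : ℝ) ≤ ε * #B}
  have hsplit : (#P : ℝ) + #Q = #B := by exact_mod_cast card_filter_add_card_filter_not _
  rcases le_or_gt (#B : ℝ) (2 * #P) with hP | hQ
  · obtain ⟨K, hKP, hK, hcard⟩ := exists_isClique_card_le_mul (d := d) P fun x hx => by
      have hx' := mem_filter.mp hx
      calc (#{y ∈ P | ¬G.Adj x y} : ℝ) ≤ #{y ∈ B | ¬G.Adj x y} := by
            gcongr; exact filter_subset _ _
        _ ≤ d := by linarith [hx'.2]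
    exact ⟨K, hKP.trans (filter_subset _ _), Or.inl hK, card_bound P K hP hcard⟩
  · obtain ⟨K, hKQ, hK, hcard⟩ := exists_isClique_card_le_mul (G := Gᶜ) (d := d) Q fun x hx => by
      have hx' := mem_filter.mp hx
      have hsub : {y ∈ Q | ¬Gᶜ.Adj x y} ⊆ insert x {y ∈ B | G.Adj x y} := by
        intro y hy
        simp only [mem_filter, compl_adj, mem_insert, Q] at hy ⊢
        tauto
      calc (#{y ∈ Q | ¬Gᶜ.Adj x y} : ℝ) ≤ #{y ∈ B | G.Adj x y} + 1 := by
            exact_mod_cast (card_le_card hsub).trans (card_insert_le _ _)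
        _ ≤ d := by linarith [(hB x hx'.1).resolve_right hx'.2]
    exact ⟨K, hKQ.trans (filter_subset _ _), Or.inr (by simpa using hK),
      card_bound Q K (by linarith) hcard⟩

variable (G) in
theorem exists_isClique_or_isIndepSet_card_eq_min_two [Fintype V] :
    ∃ S : Finset V, (G.IsClique (S : Set V) ∨ G.IsIndepSet (S : Set V)) ∧
      #S = min (Fintype.card V) 2 := by
  classical
  obtain ⟨S, -, hS⟩ := exists_subset_card_eq (s := (univ : Finset V))
    ((min_le_left _ 2).trans_eq card_univ.symm)
  refine ⟨S, ?_, hS⟩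
  rcases (show #S ≤ 1 ∨ #S = 2 by omega) with hle | htwo
  · exact Or.inl (IsClique.of_subsingleton (card_le_one.mp hle))
  obtain ⟨x, y, -, hxy⟩ := card_eq_two.mp htwo
  rw [hxy, coe_pair]
  by_cases hadj : G.Adj x y
  · exact Or.inl (isClique_pair.mpr fun _ => hadj)
  · exact Or.inr (Set.pairwise_pair.mpr fun _ => ⟨hadj, fun h => hadj h.symm⟩)

theorem exists_isClique_or_isIndepSet_of_not_hasSplitTree [Fintype V] {h : ℕ}
    (hG : ¬G.HasSplitTree h univ) {t : ℝ} (ht : 2 ≤ t) (hV : t ^ (4 * (h + 1)) ≤ Fintype.card V) :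
    ∃ K : Finset V, (G.IsClique (K : Set V) ∨ G.IsIndepSet (K : Set V)) ∧ t ≤ #K := by
  have ht₀ : 0 < t := by linarith
  obtain ⟨B, -, hB, hBcard⟩ := exists_isEpsGood_subset_of_not_hasSplitTree
    (inv_nonneg.mpr (by positivity)) (inv_le_one_of_one_le₀ (one_le_pow₀ (by linarith))) _ _ hG
  have hB4 : t ^ 4 ≤ #B := calc
    t ^ 4 = ((t ^ 4)⁻¹) ^ h * t ^ (4 * (h + 1)) := by
      rw [inv_pow, ← pow_mul, mul_add, mul_one, pow_add, inv_mul_cancel_left₀ (by positivity)]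
    _ ≤ ((t ^ 4)⁻¹) ^ h * #(univ : Finset V) := by rw [card_univ]; gcongr
    _ ≤ #B := hBcard
  obtain ⟨K, -, hK, hKcard⟩ :=
    hB.exists_isClique_or_isIndepSet ((le_inv_mul_iff₀ (by positivity)).mpr (by simpa))
  have hK4 : t ^ 4 ≤ 4 * #K := by
    rwa [mul_comm 4, mul_assoc, inv_mul_eq_div, le_div_iff₀ (by positivity), one_mul] at hKcard
  exact ⟨K, hK, by nlinarith [pow_le_pow_left₀ (by norm_num) ht 3]⟩

end SimpleGraph

theorem natCast_rpow_le_self (n : ℕ) {c : ℝ} (hc₀ : 0 < c) (hc₁ : c ≤ 1) : (n : ℝ) ^ c ≤ n := by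
  rcases Nat.eq_zero_or_pos n with rfl | hn
  · simp [Real.zero_rpow hc₀.ne']
  · exact Real.rpow_le_self_of_one_le (by exact_mod_cast hn) hc₁

theorem stable_ramsey_general (k : ℕ) :
    ∃ c : ℝ, 0 < c ∧
      ∀ (V : Type) [Fintype V] (G : SimpleGraph V),
        (¬∃ (a b : Fin k → V), ∀ i j : Fin k, G.Adj (a i) (b j) ↔ i < j) →
        ∃ S : Finset V,
          ((S : Set V).Pairwise G.Adj ∨ (S : Set V).Pairwise fun x y => ¬ G.Adj x y) ∧
          (Fintype.card V : ℝ) ^ c ≤ (S.card : ℝ) := by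
  have hc₀ : (0 : ℝ) < 1 / (4 * (2 * k + 1)) := by positivity
  refine ⟨1 / (4 * (2 * k + 1)), hc₀, fun V _ G hno => ?_⟩
  classical
  set t := (Fintype.card V : ℝ) ^ (1 / (4 * (2 * k + 1)) : ℝ)
  rcases le_or_gt t 2 with hsmall | hlarge
  · obtain ⟨S, hS, hcard⟩ := G.exists_isClique_or_isIndepSet_card_eq_min_two
    have htV : t ≤ Fintype.card V := natCast_rpow_le_self _ hc₀
      ((div_le_one (by positivity)).mpr (by linarith [(k.cast_nonneg : (0 : ℝ) ≤ k)]))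
    exact ⟨S, hS, by rw [hcard]; push_cast; exact le_min htV hsmall⟩
  have hV : t ^ (4 * (2 * k + 1)) = Fintype.card V := by
    rw [← Real.rpow_natCast, ← Real.rpow_mul (Nat.cast_nonneg _)]
    push_cast
    rw [one_div_mul_cancel (by positivity), Real.rpow_one]
  have hnotree : ¬G.HasSplitTree (2 * k) univ := fun htree => hno <| by
    obtain ⟨a, b, hab, -⟩ := htree.exists_isHalfGraph
    exact ⟨a, b, hab⟩
  exact SimpleGraph.exists_isClique_or_isIndepSet_of_not_hasSplitTree hnotree hlarge.le hV.le

/-- Stable Ramsey theorem (qualitative polynomial form): for every `k` there is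
`c > 0` such that every finite graph with no half-graph of length `k` has a
clique or independent set of size at least `|G| ^ c`. -/
theorem stable_ramsey (k : ℕ) (hk : 0 < k) :
    ∃ c : ℝ, 0 < c ∧
      ∀ (V : Type) [Fintype V] (G : SimpleGraph V),
        (¬∃ (a b : Fin k → V), ∀ i j : Fin k, G.Adj (a i) (b j) ↔ i < j) →
        ∃ S : Finset V,
          ((S : Set V).Pairwise G.Adj ∨ (S : Set V).Pairwise fun x y => ¬ G.Adj x y) ∧
          (Fintype.card V : ℝ) ^ c ≤ (S.card : ℝ) :=
  stable_ramsey_general k
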